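/- With G_{θ,θ'} := lim_n f^n_{S^{−n}θ'} ∘ (f^n_{S^{−n}θ})⁻¹ defined on K(θ) as above, one has G_{θ,θ'}(K(θ)) = K(θ') and G_{θ',θ} = G_{θ,θ'}⁻¹ on K(θ'). In particular, G_{θ,θ'} : K(θ) → K(θ') is an orientation-preserving homeomorphism. -/

import Mathlib

/-!
Write `A n = f^n_{S^{-n}θ}` and `B n = f^n_{S^{-n}θ'}`. These are increasing homeomorphisms
of `[-M, M]` onto intervals shrinking to `K(θ)` and `K(θ')`, so the approximants
`B n ∘ (A n)⁻¹` are continuous and monotone on `K(θ)` with values in `B n [-M, M]`, and their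
uniform limit `G_{θ,θ'}` is continuous and monotone from `K(θ)` into `K(θ')`.

For the inverse relation, `A n ∘ (B n)⁻¹` undoes `B n ∘ (A n)⁻¹` exactly, but the point
`B n ((A n)⁻¹ y)` may lie outside `K(θ')`, where nothing is known about the convergence to
`G_{θ',θ}`. Clamping it back into `K(θ')` costs at most the distance by which `A n ∘ (B n)⁻¹`
moves the endpoints `φ^±(θ')` away from `φ^±(θ)`. By invariance of the graphs `φ^±` this
distance is `|A n φ^±(S^{-n}θ') - A n φ^±(S^{-n}θ)| ≤ Q_f^n · c α^n` for a constant `c`,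
and it tends to zero because `α Q_f < 1`.
-/
open Set Filter Metric

/-- Iterates of the fibre maps: `fiter S f n θ = f_{S^{n-1}θ} ∘ ⋯ ∘ f_θ`. -/
def fiter {Θ : Type*} (S : Θ → Θ) (f : Θ → ℝ → ℝ) : ℕ → Θ → ℝ → ℝ
  | 0, _, y => y
  | n + 1, θ, y => f (S^[n] θ) (fiter S f n θ y)

/-- The maps `G_{θ,θ',n} = f^n_{S^{-n}θ'} ∘ (f^n_{S^{-n}θ})⁻¹` on `K_n(θ)`. -/
noncomputable def Gn {Θ : Type*} (S : Θ ≃ Θ) (f : Θ → ℝ → ℝ) (M : ℝ)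
    (θ θ' : Θ) (n : ℕ) (y : ℝ) : ℝ :=
  fiter S f n ((⇑S.symm)^[n] θ')
    (Function.invFunOn (fiter S f n ((⇑S.symm)^[n] θ)) (Icc (-M) M) y)

open Function Topology

section FibreIterates

variable {Θ : Type*} (S : Θ → Θ) {f : Θ → ℝ → ℝ} {s : Set ℝ}

theorem fiter_add (f : Θ → ℝ → ℝ) (m n : ℕ) (ϑ : Θ) (y : ℝ) :
    fiter S f (m + n) ϑ y = fiter S f n (S^[m] ϑ) (fiter S f m ϑ y) := by
  induction n with
  | zero => rfl
  | succ n ih => rw [← add_assoc, fiter, fiter, ih, ← iterate_add_apply, add_comm n m]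

theorem fiter_mapsTo (hf : ∀ θ, MapsTo (f θ) s s) (n : ℕ) (ϑ : Θ) :
    MapsTo (fiter S f n ϑ) s s := by
  induction n with
  | zero => exact mapsTo_id s
  | succ n ih => exact (hf _).comp ih

theorem fiter_continuousOn (hf : ∀ θ, MapsTo (f θ) s s) (hc : ∀ θ, ContinuousOn (f θ) s)
    (n : ℕ) (ϑ : Θ) : ContinuousOn (fiter S f n ϑ) s := by
  induction n with
  | zero => exact continuousOn_id
  | succ n ih => exact (hc _).comp ih (fiter_mapsTo S hf n ϑ)

theorem fiter_strictMonoOn (hf : ∀ θ, MapsTo (f θ) s s) (hm : ∀ θ, StrictMonoOn (f θ) s)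
    (n : ℕ) (ϑ : Θ) : StrictMonoOn (fiter S f n ϑ) s := by
  induction n with
  | zero => exact strictMonoOn_id
  | succ n ih => exact (hm _).comp ih (fiter_mapsTo S hf n ϑ)

theorem abs_fiter_sub_le {Q : ℝ} (hQ : 0 ≤ Q) (hf : ∀ θ, MapsTo (f θ) s s)
    (hlip : ∀ θ, ∀ x ∈ s, ∀ y ∈ s, |f θ x - f θ y| ≤ Q * |x - y|) (n : ℕ) (ϑ : Θ) :
    ∀ x ∈ s, ∀ y ∈ s, |fiter S f n ϑ x - fiter S f n ϑ y| ≤ Q ^ n * |x - y| := by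
  induction n with
  | zero => intro x _ y _; simp [fiter]
  | succ n ih =>
    intro x hx y hy
    calc |fiter S f (n + 1) ϑ x - fiter S f (n + 1) ϑ y|
        ≤ Q * |fiter S f n ϑ x - fiter S f n ϑ y| :=
          hlip _ _ (fiter_mapsTo S hf n ϑ hx) _ (fiter_mapsTo S hf n ϑ hy)
      _ ≤ Q * (Q ^ n * |x - y|) := mul_le_mul_of_nonneg_left (ih x hx y hy) hQ
      _ = Q ^ (n + 1) * |x - y| := by ring

end FibreIterates

/-- The paper's `f^n_{S^{-n}ϑ}`. -/
def fiterBack {Θ : Type*} (S : Θ ≃ Θ) (f : Θ → ℝ → ℝ) (n : ℕ) (ϑ : Θ) : ℝ → ℝ :=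
  fiter S f n (S.symm^[n] ϑ)

section FiterBack

variable {Θ : Type*} (S : Θ ≃ Θ) (f : Θ → ℝ → ℝ)

theorem fiterBack_add (m n : ℕ) (ϑ : Θ) (y : ℝ) :
    fiterBack S f (m + n) ϑ y = fiterBack S f n ϑ (fiterBack S f m (S.symm^[n] ϑ) y) := by
  have hcancel : S^[m] (S.symm^[m + n] ϑ) = S.symm^[n] ϑ := by
    rw [iterate_add_apply]; exact S.right_inv.iterate m _
  simp only [fiterBack]
  rw [fiter_add, hcancel, iterate_add_apply]

theorem fiterBack_succ (n : ℕ) (ϑ : Θ) (y : ℝ) :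
    fiterBack S f (n + 1) ϑ y = f (S.symm ϑ) (fiterBack S f n (S.symm ϑ) y) :=
  fiterBack_add S f n 1 ϑ y

end FiterBack

theorem abs_sub_le_of_derivWithin_le {g : ℝ → ℝ} {s : Set ℝ} {Q : ℝ} (hs : Convex ℝ s)
    (hg : DifferentiableOn ℝ g s) (hg₀ : ∀ y ∈ s, 0 ≤ derivWithin g s y)
    (hgQ : ∀ y ∈ s, derivWithin g s y ≤ Q) : ∀ x ∈ s, ∀ y ∈ s, |g x - g y| ≤ Q * |x - y| :=
  fun x hx y hy => by
    simpa [Real.norm_eq_abs] using hs.norm_image_sub_le_of_norm_derivWithin_le hg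
      (fun z hz => (abs_of_nonneg (hg₀ z hz)).trans_le (hgQ z hz)) hy hx

theorem StrictMonoOn.monotoneOn_invFunOn {α β : Type*} [LinearOrder α] [Nonempty α]
    [LinearOrder β] {g : α → β} {s : Set α} {t : Set β} (hg : StrictMonoOn g s)
    (ht : SurjOn g s t) : MonotoneOn (invFunOn g s) t := fun y hy z hz hyz =>
  (hg.le_iff_le (ht.mapsTo_invFunOn hy) (ht.mapsTo_invFunOn hz)).1 <| by
    rwa [ht.rightInvOn_invFunOn hy, ht.rightInvOn_invFunOn hz]

section InverseOnIcc

variable {g h : ℝ → ℝ} {a b : ℝ}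

theorem continuousOn_invFunOn_Icc (hab : a ≤ b) (hgc : ContinuousOn g (Icc a b))
    (hgm : StrictMonoOn g (Icc a b)) : ContinuousOn (invFunOn g (Icc a b)) (Icc (g a) (g b)) := by
  have hsurj := hgc.surjOn_Icc (left_mem_Icc.2 hab) (right_mem_Icc.2 hab)
  have hle : g a ≤ g b := hgm.monotoneOn (left_mem_Icc.2 hab) (right_mem_Icc.2 hab) hab
  -- a monotone surjection of `ℝ` onto the densely ordered `Icc a b` is continuous
  let e : ℝ → Icc a b := fun y =>
    ⟨invFunOn g (Icc a b) (projIcc (g a) (g b) hle y), hsurj.mapsTo_invFunOn (projIcc _ _ hle y).2⟩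
  have he_mono : Monotone e := fun y z hyz =>
    hgm.monotoneOn_invFunOn hsurj (projIcc _ _ hle y).2 (projIcc _ _ hle z).2
      (monotone_projIcc hle hyz)
  have he_surj : Surjective e := fun x => ⟨g x, Subtype.ext <| by
    simp only [e, projIcc_of_mem hle (hgm.monotoneOn.mapsTo_Icc x.2)]
    exact hgm.injOn.leftInvOn_invFunOn x.2⟩
  refine (continuous_subtype_val.comp (he_mono.continuous_of_surjective he_surj)).continuousOn.congr
    fun y hy => ?_
  simp [e, projIcc_of_mem hle hy]

theorem mapsTo_comp_invFunOn (hab : a ≤ b) (hgc : ContinuousOn g (Icc a b))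
    (hh : MonotoneOn h (Icc a b)) :
    MapsTo (h ∘ invFunOn g (Icc a b)) (Icc (g a) (g b)) (Icc (h a) (h b)) := fun _ hy =>
  have hx := (hgc.surjOn_Icc (left_mem_Icc.2 hab) (right_mem_Icc.2 hab)).mapsTo_invFunOn hy
  ⟨hh (left_mem_Icc.2 hab) hx hx.1, hh hx (right_mem_Icc.2 hab) hx.2⟩

theorem monotoneOn_comp_invFunOn (hab : a ≤ b) (hgc : ContinuousOn g (Icc a b))
    (hgm : StrictMonoOn g (Icc a b)) (hh : MonotoneOn h (Icc a b)) :
    MonotoneOn (h ∘ invFunOn g (Icc a b)) (Icc (g a) (g b)) :=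
  have hsurj := hgc.surjOn_Icc (left_mem_Icc.2 hab) (right_mem_Icc.2 hab)
  hh.comp (hgm.monotoneOn_invFunOn hsurj) hsurj.mapsTo_invFunOn

theorem continuousOn_comp_invFunOn (hab : a ≤ b) (hgc : ContinuousOn g (Icc a b))
    (hgm : StrictMonoOn g (Icc a b)) (hh : ContinuousOn h (Icc a b)) :
    ContinuousOn (h ∘ invFunOn g (Icc a b)) (Icc (g a) (g b)) :=
  hh.comp (continuousOn_invFunOn_Icc hab hgc hgm)
    (hgc.surjOn_Icc (left_mem_Icc.2 hab) (right_mem_Icc.2 hab)).mapsTo_invFunOn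

theorem comp_invFunOn_comp_invFunOn (hab : a ≤ b) (hgc : ContinuousOn g (Icc a b))
    (hh : InjOn h (Icc a b)) {y : ℝ} (hy : y ∈ Icc (g a) (g b)) :
    (g ∘ invFunOn h (Icc a b)) ((h ∘ invFunOn g (Icc a b)) y) = y := by
  have hsurj := hgc.surjOn_Icc (left_mem_Icc.2 hab) (right_mem_Icc.2 hab)
  simp only [comp_apply, hh.leftInvOn_invFunOn (hsurj.mapsTo_invFunOn hy)]
  exact hsurj.rightInvOn_invFunOn hy

end InverseOnIcc

theorem abs_sub_apply_projIcc_le {φ : ℝ → ℝ} {l u r s k₁ k₂ : ℝ} (hk : k₁ ≤ k₂)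
    (hsub : Icc k₁ k₂ ⊆ Icc l u) (hφ : MonotoneOn φ (Icc l u))
    (hmaps : MapsTo φ (Icc l u) (Icc r s)) {w : ℝ} (hw : w ∈ Icc l u) :
    |φ w - φ (projIcc k₁ k₂ hk w)| ≤ max (s - φ k₂) (φ k₁ - r) := by
  have hk₁ : k₁ ∈ Icc l u := hsub (left_mem_Icc.2 hk)
  have hk₂ : k₂ ∈ Icc l u := hsub (right_mem_Icc.2 hk)
  rcases le_or_gt w k₁ with h₁ | h₁
  · have := hφ hw hk₁ h₁
    rw [projIcc_of_le_left hk h₁, abs_of_nonpos (by linarith)]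
    exact le_max_of_le_right (by linarith [(hmaps hw).1])
  rcases le_or_gt k₂ w with h₂ | h₂
  · have := hφ hk₂ hw h₂
    rw [projIcc_of_right_le hk h₂, abs_of_nonneg (by linarith)]
    exact le_max_of_le_left (by linarith [(hmaps hw).2])
  · rw [projIcc_of_mem hk ⟨h₁.le, h₂.le⟩, sub_self, abs_zero]
    exact le_max_of_le_left (sub_nonneg.2 (hmaps hk₂).2)

/-- For `A n = fiterBack S f n ϑ` and `[a, b] = [-M, M]`, `Icc lo hi` is the paper's `K(ϑ)`. -/
structure ShrinkingImages (A : ℕ → ℝ → ℝ) (a b lo hi : ℝ) : Prop where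
  le : a ≤ b
  strictMonoOn : ∀ n, StrictMonoOn (A n) (Icc a b)
  continuousOn : ∀ n, ContinuousOn (A n) (Icc a b)
  monotone_left : Monotone (A · a)
  antitone_right : Antitone (A · b)
  tendsto_left : Tendsto (A · a) atTop (𝓝 lo)
  tendsto_right : Tendsto (A · b) atTop (𝓝 hi)

namespace ShrinkingImages

variable {A B : ℕ → ℝ → ℝ} {a b lo hi lo' hi' : ℝ}

theorem Icc_subset (hA : ShrinkingImages A a b lo hi) (n : ℕ) :
    Icc lo hi ⊆ Icc (A n a) (A n b) :=
  Icc_subset_Icc (hA.monotone_left.ge_of_tendsto hA.tendsto_left n)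
    (hA.antitone_right.le_of_tendsto hA.tendsto_right n)

theorem mapsTo_of_tendsto (hA : ShrinkingImages A a b lo hi) (hB : ShrinkingImages B a b lo' hi')
    {G : ℝ → ℝ}
    (hG : ∀ y ∈ Icc lo hi,
      Tendsto (fun n => (B n ∘ invFunOn (A n) (Icc a b)) y) atTop (𝓝 (G y))) :
    MapsTo G (Icc lo hi) (Icc lo' hi') := fun y hy =>
  have hmem n := mapsTo_comp_invFunOn hA.le (hA.continuousOn n)
    (hB.strictMonoOn n).monotoneOn (hA.Icc_subset n hy)
  ⟨le_of_tendsto_of_tendsto' hB.tendsto_left (hG y hy) fun n => (hmem n).1,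
    le_of_tendsto_of_tendsto' (hG y hy) hB.tendsto_right fun n => (hmem n).2⟩

theorem monotoneOn_of_tendsto (hA : ShrinkingImages A a b lo hi)
    (hB : ∀ n, MonotoneOn (B n) (Icc a b)) {G : ℝ → ℝ}
    (hG : ∀ y ∈ Icc lo hi,
      Tendsto (fun n => (B n ∘ invFunOn (A n) (Icc a b)) y) atTop (𝓝 (G y))) :
    MonotoneOn G (Icc lo hi) := fun y hy z hz hyz =>
  le_of_tendsto_of_tendsto' (hG y hy) (hG z hz) fun n =>
    monotoneOn_comp_invFunOn hA.le (hA.continuousOn n) (hA.strictMonoOn n) (hB n)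
      (hA.Icc_subset n hy) (hA.Icc_subset n hz) hyz

theorem continuousOn_of_tendstoUniformlyOn (hA : ShrinkingImages A a b lo hi)
    (hB : ∀ n, ContinuousOn (B n) (Icc a b)) {G : ℝ → ℝ}
    (hG : TendstoUniformlyOn (fun n => B n ∘ invFunOn (A n) (Icc a b)) G atTop (Icc lo hi)) :
    ContinuousOn G (Icc lo hi) :=
  hG.continuousOn <| Frequently.of_forall fun n =>
    (continuousOn_comp_invFunOn hA.le (hA.continuousOn n) (hA.strictMonoOn n) (hB n)).mono
      (hA.Icc_subset n)

theorem tendsto_comp_invFunOn (hA : ShrinkingImages A a b lo hi)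
    (hB : ShrinkingImages B a b lo' hi') {H : ℝ → ℝ}
    (hH : TendstoUniformlyOn (fun n => A n ∘ invFunOn (B n) (Icc a b)) H atTop (Icc lo' hi'))
    (hlo : Tendsto (fun n => (A n ∘ invFunOn (B n) (Icc a b)) lo') atTop (𝓝 lo))
    (hhi : Tendsto (fun n => (A n ∘ invFunOn (B n) (Icc a b)) hi') atTop (𝓝 hi))
    {w : ℕ → ℝ} {z : ℝ} (hw : ∀ n, w n ∈ Icc (B n a) (B n b)) (hwz : Tendsto w atTop (𝓝 z))
    (hz : z ∈ Icc lo' hi') :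
    Tendsto (fun n => (A n ∘ invFunOn (B n) (Icc a b)) (w n)) atTop (𝓝 (H z)) := by
  set c := fun n => A n ∘ invFunOn (B n) (Icc a b)
  have hk : lo' ≤ hi' := hz.1.trans hz.2
  set t := fun n => (projIcc lo' hi' hk (w n) : ℝ)
  have ht : Tendsto t atTop (𝓝[Icc lo' hi'] z) := by
    refine tendsto_nhdsWithin_iff.2 ⟨?_, Eventually.of_forall fun n => (projIcc _ _ hk _).2⟩
    have := ((continuous_subtype_val.comp (continuous_projIcc (h := hk))).tendsto z).comp hwz
    rwa [comp_apply, projIcc_of_mem hk hz] at this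
  have hct : Tendsto (fun n => c n (t n)) atTop (𝓝 (H z)) :=
    hH.tendsto_comp (hB.continuousOn_of_tendstoUniformlyOn hA.continuousOn hH z hz) ht
  have hgap : Tendsto (fun n => max (A n b - c n hi') (c n lo' - A n a)) atTop (𝓝 0) := by
    simpa only [sub_self, max_self] using (hA.tendsto_right.sub hhi).max (hlo.sub hA.tendsto_left)
  have hclamp : Tendsto (fun n => c n (w n) - c n (t n)) atTop (𝓝 0) :=
    squeeze_zero_norm (fun n => abs_sub_apply_projIcc_le hk (hB.Icc_subset n)
      (monotoneOn_comp_invFunOn hB.le (hB.continuousOn n) (hB.strictMonoOn n)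
        (hA.strictMonoOn n).monotoneOn)
      (mapsTo_comp_invFunOn hB.le (hB.continuousOn n) (hA.strictMonoOn n).monotoneOn) (hw n))
      hgap
  simpa only [add_sub_cancel, add_zero] using hct.add hclamp

theorem leftInvOn_of_tendstoUniformlyOn (hA : ShrinkingImages A a b lo hi)
    (hB : ShrinkingImages B a b lo' hi') {G H : ℝ → ℝ}
    (hG : TendstoUniformlyOn (fun n => B n ∘ invFunOn (A n) (Icc a b)) G atTop (Icc lo hi))
    (hH : TendstoUniformlyOn (fun n => A n ∘ invFunOn (B n) (Icc a b)) H atTop (Icc lo' hi'))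
    (hlo : Tendsto (fun n => (A n ∘ invFunOn (B n) (Icc a b)) lo') atTop (𝓝 lo))
    (hhi : Tendsto (fun n => (A n ∘ invFunOn (B n) (Icc a b)) hi') atTop (𝓝 hi)) :
    LeftInvOn H G (Icc lo hi) := by
  intro y hy
  have hw n : (B n ∘ invFunOn (A n) (Icc a b)) y ∈ Icc (B n a) (B n b) :=
    mapsTo_comp_invFunOn hA.le (hA.continuousOn n) (hB.strictMonoOn n).monotoneOn
      (hA.Icc_subset n hy)
  have hGy : G y ∈ Icc lo' hi' := hA.mapsTo_of_tendsto hB (fun y hy => hG.tendsto_at hy) hy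
  refine tendsto_nhds_unique (hA.tendsto_comp_invFunOn hB hH hlo hhi hw (hG.tendsto_at hy) hGy)
    (tendsto_const_nhds.congr fun n => ?_)
  exact (comp_invFunOn_comp_invFunOn hA.le (hA.continuousOn n) (hB.strictMonoOn n).injOn
    (hA.Icc_subset n hy)).symm

end ShrinkingImages

section BoundaryGraphs

variable {Θ : Type*} {S : Θ ≃ Θ} {f : Θ → ℝ → ℝ} {s : Set ℝ}

theorem mem_of_tendsto_fiterBack (hs : IsClosed s) (hf : ∀ θ, MapsTo (f θ) s s) {x₀ y : ℝ}
    (hx₀ : x₀ ∈ s) {ϑ : Θ} (hy : Tendsto (fun n => fiterBack S f n ϑ x₀) atTop (𝓝 y)) : y ∈ s :=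
  hs.mem_of_tendsto hy (Eventually.of_forall fun n => fiter_mapsTo S hf n _ hx₀)

theorem fiterBack_apply_eq_of_tendsto (hs : IsClosed s) (hf : ∀ θ, MapsTo (f θ) s s)
    (hc : ∀ θ, ContinuousOn (f θ) s) {φ : Θ → ℝ} {x₀ : ℝ} (hx₀ : x₀ ∈ s)
    (hφ : ∀ ϑ, Tendsto (fun n => fiterBack S f n ϑ x₀) atTop (𝓝 (φ ϑ))) (n : ℕ) (ϑ : Θ) :
    fiterBack S f n ϑ (φ (S.symm^[n] ϑ)) = φ ϑ := by
  have hlim : Tendsto (fun m => fiterBack S f m (S.symm^[n] ϑ) x₀) atTop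
      (𝓝[s] φ (S.symm^[n] ϑ)) :=
    tendsto_nhdsWithin_iff.2 ⟨hφ _, Eventually.of_forall fun m => fiter_mapsTo S hf m _ hx₀⟩
  have hcont : ContinuousWithinAt (fiterBack S f n ϑ) s (φ (S.symm^[n] ϑ)) :=
    fiter_continuousOn S hf hc n _ _ (mem_of_tendsto_fiterBack hs hf hx₀ (hφ _))
  refine tendsto_nhds_unique ?_ ((hφ ϑ).comp (tendsto_add_atTop_nat n))
  exact (hcont.tendsto.comp hlim).congr fun m => (fiterBack_add S f m n ϑ x₀).symm

variable [MetricSpace Θ] {Q L C α : ℝ}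

/-- The constant `L C d(p,q) α / (1 - Q α)` is the fixed point of `c ↦ Q c α + L C d(p,q) α`,
which is what makes the induction close. -/
theorem abs_fiterBack_sub_le (hf : ∀ θ, MapsTo (f θ) s s)
    (hlip : ∀ θ, ∀ x ∈ s, ∀ y ∈ s, |f θ x - f θ y| ≤ Q * |x - y|)
    (hLip : ∀ θ θ' : Θ, ∀ y ∈ s, |f θ y - f θ' y| ≤ L * dist θ θ')
    (hQ : 0 ≤ Q) (hL : 0 ≤ L) (hC : 0 ≤ C) (hα : 0 ≤ α) (hQα : Q * α < 1) {p q : Θ}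
    (hpq : ∀ n : ℕ, 0 < n → dist (S.symm^[n] p) (S.symm^[n] q) ≤ C * α ^ n * dist p q)
    (n m : ℕ) {x : ℝ} (hx : x ∈ s) :
    |fiterBack S f n (S.symm^[m] p) x - fiterBack S f n (S.symm^[m] q) x|
      ≤ L * C * dist p q * α / (1 - Q * α) * α ^ m := by
  have h1Qα : 0 < 1 - Q * α := sub_pos.2 hQα
  induction n generalizing m with
  | zero => simpa [fiterBack, fiter] using by positivity
  | succ n ih =>
    rw [fiterBack_succ, fiterBack_succ, ← iterate_succ_apply' S.symm m p,
      ← iterate_succ_apply' S.symm m q]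
    set P := S.symm^[m + 1] p
    set P' := S.symm^[m + 1] q
    set u := fiterBack S f n P x
    set v := fiterBack S f n P' x
    have hu : u ∈ s := fiter_mapsTo S hf n _ hx
    have hv : v ∈ s := fiter_mapsTo S hf n _ hx
    calc |f P u - f P' v| ≤ |f P u - f P v| + |f P v - f P' v| := abs_sub_le _ _ _
      _ ≤ Q * |u - v| + L * dist P P' := add_le_add (hlip _ u hu v hv) (hLip _ _ v hv)
      _ ≤ Q * (L * C * dist p q * α / (1 - Q * α) * α ^ (m + 1))
            + L * (C * α ^ (m + 1) * dist p q) := by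
          gcongr
          · exact ih (m + 1)
          · exact hpq (m + 1) m.succ_pos
      _ = L * C * dist p q * α / (1 - Q * α) * α ^ m := by
          field_simp
          ring

theorem tendsto_Gn_of_tendsto_fiterBack {M : ℝ}
    (hf : ∀ θ, MapsTo (f θ) (Icc (-M) M) (Icc (-M) M))
    (hc : ∀ θ, ContinuousOn (f θ) (Icc (-M) M)) (hm : ∀ θ, StrictMonoOn (f θ) (Icc (-M) M))
    (hlip : ∀ θ, ∀ x ∈ Icc (-M) M, ∀ y ∈ Icc (-M) M, |f θ x - f θ y| ≤ Q * |x - y|)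
    (hLip : ∀ θ θ' : Θ, ∀ y ∈ Icc (-M) M, |f θ y - f θ' y| ≤ L * dist θ θ')
    (hQ : 0 ≤ Q) (hL : 0 ≤ L) (hC : 0 ≤ C) (hα : 0 ≤ α) (hQα : Q * α < 1) {p q : Θ}
    (hpq : ∀ n : ℕ, 0 < n → dist (S.symm^[n] p) (S.symm^[n] q) ≤ C * α ^ n * dist p q)
    {φ : Θ → ℝ} {x₀ : ℝ} (hx₀ : x₀ ∈ Icc (-M) M)
    (hφ : ∀ ϑ, Tendsto (fun n => fiterBack S f n ϑ x₀) atTop (𝓝 (φ ϑ))) :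
    Tendsto (fun n => Gn S f M q p n (φ q)) atTop (𝓝 (φ p)) := by
  set c := L * C * dist p q * α / (1 - Q * α)
  have hmem ϑ : φ ϑ ∈ Icc (-M) M := mem_of_tendsto_fiterBack isClosed_Icc hf hx₀ (hφ ϑ)
  have hinv := fiterBack_apply_eq_of_tendsto isClosed_Icc hf hc hx₀ hφ
  have hGn n : Gn S f M q p n (φ q) = fiterBack S f n p (φ (S.symm^[n] q)) := by
    conv_lhs => rw [← hinv n q]
    exact congrArg (fiterBack S f n p)
      ((fiter_strictMonoOn S hf hm n _).injOn.leftInvOn_invFunOn (hmem _))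
  have hgraph n : |φ (S.symm^[n] q) - φ (S.symm^[n] p)| ≤ c * α ^ n := by
    rw [abs_sub_comm]
    exact le_of_tendsto (((hφ _).sub (hφ _)).abs) (Eventually.of_forall fun k =>
      abs_fiterBack_sub_le hf hlip hLip hQ hL hC hα hQα hpq k n hx₀)
  rw [← tendsto_sub_nhds_zero_iff]
  refine squeeze_zero_norm (fun n => ?_) (by
    simpa using (tendsto_pow_atTop_nhds_zero_of_lt_one (by positivity) hQα).const_mul c)
  calc ‖Gn S f M q p n (φ q) - φ p‖
      = |fiterBack S f n p (φ (S.symm^[n] q)) - fiterBack S f n p (φ (S.symm^[n] p))| := by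
        rw [Real.norm_eq_abs, hGn, hinv]
    _ ≤ Q ^ n * (c * α ^ n) := (abs_fiter_sub_le S hQ hf hlip n _ _ (hmem _) _ (hmem _)).trans
        (mul_le_mul_of_nonneg_left (hgraph n) (pow_nonneg hQ n))
    _ = c * (Q * α) ^ n := by ring

end BoundaryGraphs

theorem stmt4_general {Θ : Type*} [MetricSpace Θ]
    (S : Θ ≃ Θ) (M : ℝ) (hM : 0 < M)
    (f : Θ → ℝ → ℝ)
    (hmaps : ∀ θ, MapsTo (f θ) (Icc (-M) M) (Ioo (-M) M))
    (hmono : ∀ θ, StrictMonoOn (f θ) (Icc (-M) M))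
    (hC1 : ∀ θ, ContDiffOn ℝ 1 (f θ) (Icc (-M) M))
    (hpos : ∀ θ, ∀ y ∈ Icc (-M) M, 0 < derivWithin (f θ) (Icc (-M) M) y)
    (L C α Qf : ℝ) (hL : 0 ≤ L) (hC : 0 < C) (hα : α ∈ Ioo (0:ℝ) 1)
    (hLip : ∀ θ θ' : Θ, ∀ y ∈ Icc (-M) M, |f θ y - f θ' y| ≤ L * dist θ θ')
    (hQf : ∀ θ, ∀ y ∈ Icc (-M) M, derivWithin (f θ) (Icc (-M) M) y ≤ Qf)
    (hαQ : α * Qf < 1)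
    (φm φp : Θ → ℝ)
    (hφp : ∀ ϑ : Θ, Antitone (fun n => fiter S f n ((⇑S.symm)^[n] ϑ) M) ∧
      Tendsto (fun n => fiter S f n ((⇑S.symm)^[n] ϑ) M) atTop (nhds (φp ϑ)))
    (hφm : ∀ ϑ : Θ, Monotone (fun n => fiter S f n ((⇑S.symm)^[n] ϑ) (-M)) ∧
      Tendsto (fun n => fiter S f n ((⇑S.symm)^[n] ϑ) (-M)) atTop (nhds (φm ϑ)))
    (θ θ' : Θ)
    (hstable : ∀ n : ℕ, 0 < n →
      dist ((⇑S.symm)^[n] θ) ((⇑S.symm)^[n] θ') ≤ C * α ^ n * dist θ θ')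
    (hstable' : ∀ n : ℕ, 0 < n →
      dist ((⇑S.symm)^[n] θ') ((⇑S.symm)^[n] θ) ≤ C * α ^ n * dist θ' θ)
    -- G_{θ,θ'} and G_{θ',θ} as the uniform limits of the G_{·,·,n}
    (G Gswap : ℝ → ℝ)
    (hG : TendstoUniformlyOn (Gn S f M θ θ') G atTop (Icc (φm θ) (φp θ)))
    (hGswap : TendstoUniformlyOn (Gn S f M θ' θ) Gswap atTop (Icc (φm θ') (φp θ'))) :
    G '' Icc (φm θ) (φp θ) = Icc (φm θ') (φp θ') ∧
    (∀ y ∈ Icc (φm θ) (φp θ), Gswap (G y) = y) ∧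
    (∀ y ∈ Icc (φm θ') (φp θ'), G (Gswap y) = y) ∧
    StrictMonoOn G (Icc (φm θ) (φp θ)) ∧
    ContinuousOn G (Icc (φm θ) (φp θ)) := by
  have hMM : -M ≤ M := by linarith
  have h0 : (0 : ℝ) ∈ Icc (-M) M := ⟨by linarith, hM.le⟩
  have hf : ∀ ϑ, MapsTo (f ϑ) (Icc (-M) M) (Icc (-M) M) :=
    fun ϑ => (hmaps ϑ).mono_right Ioo_subset_Icc_self
  have hc : ∀ ϑ, ContinuousOn (f ϑ) (Icc (-M) M) := fun ϑ => (hC1 ϑ).continuousOn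
  have hlip ϑ := abs_sub_le_of_derivWithin_le (convex_Icc (-M) M)
    ((hC1 ϑ).differentiableOn one_ne_zero) (fun y hy => (hpos ϑ y hy).le) (hQf ϑ)
  have hQ : 0 ≤ Qf := (hpos θ 0 h0).le.trans (hQf θ 0 h0)
  have hK ϑ : ShrinkingImages (fiterBack S f · ϑ) (-M) M (φm ϑ) (φp ϑ) :=
    ⟨hMM, fun n => fiter_strictMonoOn S hf hmono n _, fun n => fiter_continuousOn S hf hc n _,
      (hφm ϑ).1, (hφp ϑ).1, (hφm ϑ).2, (hφp ϑ).2⟩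
  have hbdry {p q : Θ}
      (hpq : ∀ n : ℕ, 0 < n → dist (S.symm^[n] p) (S.symm^[n] q) ≤ C * α ^ n * dist p q)
      {φ : Θ → ℝ} {x₀ : ℝ} (hx₀ : x₀ ∈ Icc (-M) M)
      (hφ : ∀ ϑ, Tendsto (fun n => fiterBack S f n ϑ x₀) atTop (𝓝 (φ ϑ))) :
      Tendsto (fun n => Gn S f M q p n (φ q)) atTop (𝓝 (φ p)) :=
    tendsto_Gn_of_tendsto_fiterBack hf hc hmono hlip hLip hQ hL hC.le hα.1.le ((mul_comm Qf α).trans_lt hαQ) hpq hx₀ hφ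
  have hleft := (hK θ).leftInvOn_of_tendstoUniformlyOn (hK θ') hG hGswap
    (hbdry hstable (left_mem_Icc.2 hMM) fun ϑ => (hφm ϑ).2)
    (hbdry hstable (right_mem_Icc.2 hMM) fun ϑ => (hφp ϑ).2)
  have hright := (hK θ').leftInvOn_of_tendstoUniformlyOn (hK θ) hGswap hG
    (hbdry hstable' (left_mem_Icc.2 hMM) fun ϑ => (hφm ϑ).2)
    (hbdry hstable' (right_mem_Icc.2 hMM) fun ϑ => (hφp ϑ).2)
  have hGmaps := (hK θ).mapsTo_of_tendsto (hK θ') fun y hy => hG.tendsto_at hy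
  have hHmaps := (hK θ').mapsTo_of_tendsto (hK θ) fun y hy => hGswap.tendsto_at hy
  refine ⟨(InvOn.bijOn ⟨hleft, hright⟩ hGmaps hHmaps).image_eq, hleft, hright, ?_,
    (hK θ).continuousOn_of_tendstoUniformlyOn (hK θ').continuousOn hG⟩
  exact ((hK θ).monotoneOn_of_tendsto (fun n => ((hK θ').strictMonoOn n).monotoneOn)
    fun y hy => hG.tendsto_at hy).strictMonoOn_of_injOn hleft.injOn

/-- second part of Proposition `theo:g`. With
`G_{θ,θ'} = lim_n f^n_{S^{-n}θ'} ∘ (f^n_{S^{-n}θ})⁻¹` on `K(θ)`, one has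
`G_{θ,θ'}(K(θ)) = K(θ')` and `G_{θ',θ} = G_{θ,θ'}⁻¹` on `K(θ')`; in particular
`G_{θ,θ'} : K(θ) → K(θ')` is an orientation-preserving homeomorphism. -/
theorem stmt4 {Θ : Type*} [MetricSpace Θ] [CompactSpace Θ]
    (S : Θ ≃ Θ) (M : ℝ) (hM : 0 < M)
    (f : Θ → ℝ → ℝ)
    (hmaps : ∀ θ, MapsTo (f θ) (Icc (-M) M) (Ioo (-M) M))
    (hmono : ∀ θ, StrictMonoOn (f θ) (Icc (-M) M))
    (hC1 : ∀ θ, ContDiffOn ℝ 1 (f θ) (Icc (-M) M))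
    (hpos : ∀ θ, ∀ y ∈ Icc (-M) M, 0 < derivWithin (f θ) (Icc (-M) M) y)
    (L C α Qf : ℝ) (hL : 0 ≤ L) (hC : 0 < C) (hα : α ∈ Ioo (0:ℝ) 1)
    (hLip : ∀ θ θ' : Θ, ∀ y ∈ Icc (-M) M, |f θ y - f θ' y| ≤ L * dist θ θ')
    (hQf : ∀ θ, ∀ y ∈ Icc (-M) M, derivWithin (f θ) (Icc (-M) M) y ≤ Qf)
    (hαQ : α * Qf < 1)
    (φm φp : Θ → ℝ)
    (hφp : ∀ ϑ : Θ, Antitone (fun n => fiter S f n ((⇑S.symm)^[n] ϑ) M) ∧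
      Tendsto (fun n => fiter S f n ((⇑S.symm)^[n] ϑ) M) atTop (nhds (φp ϑ)))
    (hφm : ∀ ϑ : Θ, Monotone (fun n => fiter S f n ((⇑S.symm)^[n] ϑ) (-M)) ∧
      Tendsto (fun n => fiter S f n ((⇑S.symm)^[n] ϑ) (-M)) atTop (nhds (φm ϑ)))
    (θ θ' : Θ)
    (hstable : ∀ n : ℕ, 0 < n →
      dist ((⇑S.symm)^[n] θ) ((⇑S.symm)^[n] θ') ≤ C * α ^ n * dist θ θ')
    (hstable' : ∀ n : ℕ, 0 < n →
      dist ((⇑S.symm)^[n] θ') ((⇑S.symm)^[n] θ) ≤ C * α ^ n * dist θ' θ)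
    -- G_{θ,θ'} and G_{θ',θ} as the uniform limits of the G_{·,·,n}
    (G Gswap : ℝ → ℝ)
    (hG : TendstoUniformlyOn (Gn S f M θ θ') G atTop (Icc (φm θ) (φp θ)))
    (hGswap : TendstoUniformlyOn (Gn S f M θ' θ) Gswap atTop (Icc (φm θ') (φp θ'))) :
    G '' Icc (φm θ) (φp θ) = Icc (φm θ') (φp θ') ∧
    (∀ y ∈ Icc (φm θ) (φp θ), Gswap (G y) = y) ∧
    (∀ y ∈ Icc (φm θ') (φp θ'), G (Gswap y) = y) ∧
    StrictMonoOn G (Icc (φm θ) (φp θ)) ∧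
    ContinuousOn G (Icc (φm θ) (φp θ)) :=
  stmt4_general S M hM f hmaps hmono hC1 hpos L C α Qf hL hC hα hLip hQf hαQ φm φp hφp hφm θ θ'
    hstable hstable' G Gswap hG hGswap
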